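/- arXiv:2210.02272 — 2 statements merged into one kernel-verified Lean document; each statement's English description precedes it below -/
import Mathlib

section
/- Let Ω ⊆ ℝ^d be a measurable set with finite Lebesgue measure and let J be a nonempty finite index set. For all j,k ∈ J let β_{jk} ∈ L^∞(Ω) and β_j^e ∈ L^∞(Ω) be nonnegative almost everywhere, and assume the symmetry β_{jk} = β_{kj} almost everywhere for all j,k ∈ J. Then for every family (p_j)_{j∈J} in L²(Ω), the coupling forms satisfy the coercivity bound Σ_{j∈J} C_j((p_k)_{k∈J}, p_j) ≥ Σ_{j∈J} ∫_Ω β_j^e p_j². -/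
/-!
Writing `I j k = ∫ β_{jk} (p_j - p_k) p_j`, symmetry of `β` turns `I j k + I k j` into
`∫ β_{jk} (p_j - p_k)²`, which is nonnegative. Summing over all ordered pairs counts each
pair twice, so `∑_{j,k} I j k ≥ 0`, and what remains of `∑_j C_j(p, p_j)` is exactly the
exterior term `∑_j ∫ β_j^e p_j²`.
-/

open MeasureTheory

theorem Finset.sum_sum_nonneg_of_add_swap_nonneg {ι M : Type*} [AddCommGroup M] [LinearOrder M]
    [IsOrderedAddMonoid M] (s : Finset ι) (f : ι → ι → M)
    (h : ∀ i ∈ s, ∀ j ∈ s, 0 ≤ f i j + f j i) :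
    0 ≤ ∑ i ∈ s, ∑ j ∈ s, f i j := by
  have hdouble : 0 ≤ (∑ i ∈ s, ∑ j ∈ s, f i j) + ∑ i ∈ s, ∑ j ∈ s, f i j := by
    nth_rewrite 2 [Finset.sum_comm]
    simp only [← Finset.sum_add_distrib]
    exact Finset.sum_nonneg fun i hi => Finset.sum_nonneg fun j hj => h i hi j hj
  by_contra hneg
  exact not_le_of_gt (add_neg (not_le.mp hneg) (not_le.mp hneg)) hdouble

section Coupling

variable {α : Type*} [MeasurableSpace α] {μ : Measure α}

theorem MeasureTheory.MemLp.integrable_mul_mul_of_top {b f g : α → ℝ} (hb : MemLp b ⊤ μ)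
    (hf : MemLp f 2 μ) (hg : MemLp g 2 μ) : Integrable (fun x => b x * f x * g x) μ := by
  have h : Integrable (fun x => b x * (f x * g x)) μ := (hf.integrable_mul hg).mul_of_top_right hb
  simpa only [mul_assoc] using h

theorem integral_mul_sub_mul_add_swap_nonneg {b b' p q : α → ℝ} (hb : MemLp b ⊤ μ)
    (hb0 : ∀ᵐ x ∂μ, 0 ≤ b x) (hsymm : b' =ᵐ[μ] b) (hp : MemLp p 2 μ) (hq : MemLp q 2 μ) :
    0 ≤ (∫ x, b x * (p x - q x) * p x ∂μ) + ∫ x, b' x * (q x - p x) * q x ∂μ := by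
  have hswap : ∫ x, b' x * (q x - p x) * q x ∂μ = ∫ x, b x * (q x - p x) * q x ∂μ :=
    integral_congr_ae (by filter_upwards [hsymm] with x hx; rw [hx])
  have hpq : MemLp (fun x => p x - q x) 2 μ := hp.sub hq
  have hqp : MemLp (fun x => q x - p x) 2 μ := hq.sub hp
  rw [hswap, ← integral_add (hb.integrable_mul_mul_of_top hpq hp)
    (hb.integrable_mul_mul_of_top hqp hq)]
  refine integral_nonneg_of_ae ?_
  filter_upwards [hb0] with x hx
  calc (0 : ℝ) ≤ b x * (p x - q x) ^ 2 := mul_nonneg hx (sq_nonneg _)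
    _ = b x * (p x - q x) * p x + b x * (q x - p x) * q x := by ring

end Coupling

theorem mpet_coupling_coercivity_general
    (d : ℕ) (Ω : Set (EuclideanSpace ℝ (Fin d)))
    (J : Type) [Fintype J]
    (β : J → J → EuclideanSpace ℝ (Fin d) → ℝ)
    (βe : J → EuclideanSpace ℝ (Fin d) → ℝ)
    (hβ : ∀ j k, MemLp (β j k) ⊤ (volume.restrict Ω))
    (hβ0 : ∀ j k, ∀ᵐ x ∂(volume.restrict Ω), 0 ≤ β j k x)
    (hβsym : ∀ j k, β j k =ᵐ[volume.restrict Ω] β k j)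
    (p : J → EuclideanSpace ℝ (Fin d) → ℝ)
    (hp : ∀ j, MemLp (p j) 2 (volume.restrict Ω))
    (C : J → (J → EuclideanSpace ℝ (Fin d) → ℝ) →
      (EuclideanSpace ℝ (Fin d) → ℝ) → ℝ)
    (hC : ∀ j pp qq, C j pp qq =
      (∑ k, ∫ x in Ω, β j k x * (pp j x - pp k x) * qq x) +
        ∫ x in Ω, βe j x * pp j x * qq x) :
    ∑ j, C j p (p j) ≥ ∑ j, ∫ x in Ω, βe j x * (p j x) ^ 2 := by
  have hcoupling : 0 ≤ ∑ j, ∑ k, ∫ x in Ω, β j k x * (p j x - p k x) * p j x :=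
    Finset.sum_sum_nonneg_of_add_swap_nonneg _ _ fun j _ k _ =>
      integral_mul_sub_mul_add_swap_nonneg (hβ j k) (hβ0 j k) (hβsym k j) (hp j) (hp k)
  have hexterior : ∀ j, ∫ x in Ω, βe j x * p j x * p j x = ∫ x in Ω, βe j x * (p j x) ^ 2 :=
    fun j => integral_congr_ae (Filter.Eventually.of_forall fun x => by ring)
  simp only [hC, Finset.sum_add_distrib, hexterior]
  linarith

/-- Coercivity of the network coupling forms `C_j` (Proposition 3, coercivity part):
`∑_j C_j((p_k)_k, p_j) ≥ ∑_j ∫_Ω β_j^e p_j²`. -/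
theorem mpet_coupling_coercivity
    (d : ℕ) (Ω : Set (EuclideanSpace ℝ (Fin d))) (hΩ : MeasurableSet Ω)
    (hfin : volume Ω < ⊤)
    (J : Type) [Fintype J] [Nonempty J]
    (β : J → J → EuclideanSpace ℝ (Fin d) → ℝ)
    (βe : J → EuclideanSpace ℝ (Fin d) → ℝ)
    (hβ : ∀ j k, MemLp (β j k) ⊤ (volume.restrict Ω))
    (hβe : ∀ j, MemLp (βe j) ⊤ (volume.restrict Ω))
    (hβ0 : ∀ j k, ∀ᵐ x ∂(volume.restrict Ω), 0 ≤ β j k x)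
    (hβe0 : ∀ j, ∀ᵐ x ∂(volume.restrict Ω), 0 ≤ βe j x)
    (hβsym : ∀ j k, β j k =ᵐ[volume.restrict Ω] β k j)
    (p : J → EuclideanSpace ℝ (Fin d) → ℝ)
    (hp : ∀ j, MemLp (p j) 2 (volume.restrict Ω))
    (C : J → (J → EuclideanSpace ℝ (Fin d) → ℝ) →
      (EuclideanSpace ℝ (Fin d) → ℝ) → ℝ)
    (hC : ∀ j pp qq, C j pp qq =
      (∑ k, ∫ x in Ω, β j k x * (pp j x - pp k x) * qq x) +
        ∫ x in Ω, βe j x * pp j x * qq x) :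
    ∑ j, C j p (p j) ≥ ∑ j, ∫ x in Ω, βe j x * (p j x) ^ 2 :=
  mpet_coupling_coercivity_general d Ω J β βe hβ hβ0 hβsym p hp C hC
end

section
/- Let J be a nonempty finite index set and N, M ∈ ℕ. Let M_u ∈ ℝ^{N×N} be symmetric positive definite, K_u ∈ ℝ^{N×N} symmetric positive semidefinite, and for each k ∈ J let M_k ∈ ℝ^{M×M} be symmetric positive definite, K_k, C_k^e ∈ ℝ^{M×M} symmetric positive semidefinite, B_k ∈ ℝ^{M×N}, and for all j,k ∈ J let C_{kj} ∈ ℝ^{M×M} be symmetric positive semidefinite with C_{kj} = C_{jk}. Let T > 0, U ∈ C²([0,T]; ℝ^N), P_k ∈ C¹([0,T]; ℝ^M) for k ∈ J, F ∈ C⁰([0,T]; ℝ^N), G_k ∈ C⁰([0,T]; ℝ^M), and assume for all t ∈ [0,T]: M_u U''(t) + K_u U(t) − Σ_{k∈J} B_kᵀ P_k(t) = F(t) and, for each k ∈ J, M_k P_k'(t) + B_k U'(t) + K_k P_k(t) + Σ_{j∈J} C_{kj}(P_k(t) − P_j(t)) + C_k^e P_k(t) = G_k(t). Define the energy E(t)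 = ⟨M_u U'(t), U'(t)⟩ + ⟨K_u U(t), U(t)⟩ + Σ_{k∈J} ⟨M_k P_k(t), P_k(t)⟩. Then E is differentiable on [0,T] and for all t, E'(t) = 2⟨F(t), U'(t)⟩ + 2 Σ_{k∈J} ⟨G_k(t), P_k(t)⟩ − 2 Σ_{k∈J} ⟨K_k P_k(t), P_k(t)⟩ − 2 Σ_{k∈J} ⟨C_k^e P_k(t), P_k(t)⟩ − Σ_{k∈J} Σ_{j∈J} ⟨C_{kj}(P_k(t) − P_j(t)), P_k(t) − P_j(t)⟩, where ⟨·,·⟩ denotes the Euclidean inner product. -/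
/-!
Differentiating the three quadratic forms and using the symmetry of `Mu`, `Ku` and `Mk k`
gives `E' = 2⟨Mu U'', U'⟩ + 2⟨Ku U, U'⟩ + 2 ∑ₖ ⟨Mk k Pₖ', Pₖ⟩`. Testing the momentum equation
with `U'` and the k-th mass balance with `Pₖ`, the couplings `⟨Bₖᵀ Pₖ, U'⟩` and `⟨Bₖ U', Pₖ⟩`
cancel, and `C k j = C j k` turns `∑ₖ ∑ⱼ ⟨C k j (Pₖ - Pⱼ), Pₖ⟩` into half of the transfer
dissipation `∑ₖ ∑ⱼ ⟨C k j (Pₖ - Pⱼ), Pₖ - Pⱼ⟩`.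
-/

open Matrix

theorem Matrix.IsSymm.mulVec_dotProduct_comm {n R : Type*} [Fintype n] [CommSemiring R]
    {A : Matrix n n R} (hA : A.IsSymm) (x y : n → R) : A *ᵥ x ⬝ᵥ y = A *ᵥ y ⬝ᵥ x := by
  rw [dotProduct_comm, dotProduct_mulVec, ← mulVec_transpose, hA.eq]

theorem Matrix.transpose_mulVec_dotProduct {m n R : Type*} [Fintype m] [Fintype n]
    [CommSemiring R] (B : Matrix m n R) (p : m → R) (u : n → R) :
    Bᵀ *ᵥ p ⬝ᵥ u = B *ᵥ u ⬝ᵥ p := by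
  rw [mulVec_transpose, ← dotProduct_mulVec, dotProduct_comm]

theorem Matrix.sum_sum_mulVec_sub_dotProduct_sub {ι n R : Type*} [Fintype ι] [Fintype n]
    [CommRing R]
    (C : ι → ι → Matrix n n R) (hC : ∀ k j, C k j = C j k) (p : ι → n → R) :
    ∑ k, ∑ j, C k j *ᵥ (p k - p j) ⬝ᵥ (p k - p j)
      = 2 * ∑ k, ∑ j, C k j *ᵥ (p k - p j) ⬝ᵥ p k := by
  have hswap : ∑ k, ∑ j, C k j *ᵥ (p k - p j) ⬝ᵥ p j
      = -∑ k, ∑ j, C k j *ᵥ (p k - p j) ⬝ᵥ p k := by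
    rw [Finset.sum_comm, ← Finset.sum_neg_distrib]
    refine Finset.sum_congr rfl fun j _ => ?_
    rw [← Finset.sum_neg_distrib]
    refine Finset.sum_congr rfl fun k _ => ?_
    rw [hC k j, ← neg_sub, mulVec_neg, neg_dotProduct]
  simp only [dotProduct_sub, Finset.sum_sub_distrib, hswap]
  ring

section Derivatives

variable {𝕜 : Type*} [NontriviallyNormedField 𝕜] {n : Type*} [Fintype n]
  {s : Set 𝕜} {t : 𝕜}

theorem HasDerivWithinAt.dotProduct {x y : 𝕜 → n → 𝕜} {x' y' : n → 𝕜}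
    (hx : HasDerivWithinAt x x' s t) (hy : HasDerivWithinAt y y' s t) :
    HasDerivWithinAt (fun τ => x τ ⬝ᵥ y τ) (x' ⬝ᵥ y t + x t ⬝ᵥ y') s t := by
  have := HasDerivWithinAt.fun_sum (u := Finset.univ) fun i _ =>
    (hasDerivWithinAt_pi.1 hx i).mul (hasDerivWithinAt_pi.1 hy i)
  simp only [Pi.mul_apply, Finset.sum_add_distrib] at this
  exact this

theorem HasDerivWithinAt.mulVec (A : Matrix n n 𝕜) {x : 𝕜 → n → 𝕜} {x' : n → 𝕜}
    (hx : HasDerivWithinAt x x' s t) :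
    HasDerivWithinAt (fun τ => A *ᵥ x τ) (A *ᵥ x') s t :=
  hasDerivWithinAt_pi.2 fun i => by
    have := (hasDerivWithinAt_const t s (A i)).dotProduct hx
    rw [zero_dotProduct, zero_add] at this
    exact this

theorem HasDerivWithinAt.mulVec_dotProduct_self {A : Matrix n n 𝕜} (hA : A.IsSymm)
    {x : 𝕜 → n → 𝕜} {x' : n → 𝕜} (hx : HasDerivWithinAt x x' s t) :
    HasDerivWithinAt (fun τ => A *ᵥ x τ ⬝ᵥ x τ) (2 * (A *ᵥ x' ⬝ᵥ x t)) s t := by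
  convert (hx.mulVec A).dotProduct hx using 1
  rw [hA.mulVec_dotProduct_comm (x t), two_mul]

end Derivatives

theorem mpet_semidiscrete_energy_identity_general
    (J : Type) [Fintype J] (N M : ℕ)
    (Mu : Matrix (Fin N) (Fin N) ℝ) (hMu : Mu.PosDef)
    (Ku : Matrix (Fin N) (Fin N) ℝ) (hKu : Ku.PosSemidef)
    (Mk : J → Matrix (Fin M) (Fin M) ℝ) (hMk : ∀ k, (Mk k).PosDef)
    (Kk : J → Matrix (Fin M) (Fin M) ℝ)
    (Ce : J → Matrix (Fin M) (Fin M) ℝ)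
    (B : J → Matrix (Fin M) (Fin N) ℝ)
    (C : J → J → Matrix (Fin M) (Fin M) ℝ)
    (hCsym : ∀ k j, C k j = C j k)
    (T : ℝ)
    (U U' U'' : ℝ → Fin N → ℝ)
    (P P' : J → ℝ → Fin M → ℝ)
    (F : ℝ → Fin N → ℝ) (G : J → ℝ → Fin M → ℝ)
    (hU : ∀ t ∈ Set.Icc 0 T, HasDerivWithinAt U (U' t) (Set.Icc 0 T) t)
    (hU' : ∀ t ∈ Set.Icc 0 T, HasDerivWithinAt U' (U'' t) (Set.Icc 0 T) t)
    (hP : ∀ k, ∀ t ∈ Set.Icc 0 T, HasDerivWithinAt (P k) (P' k t) (Set.Icc 0 T) t)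
    (heq1 : ∀ t ∈ Set.Icc 0 T,
      Mu.mulVec (U'' t) + Ku.mulVec (U t) - ∑ k, (B k)ᵀ.mulVec (P k t) = F t)
    (heq2 : ∀ k, ∀ t ∈ Set.Icc 0 T,
      (Mk k).mulVec (P' k t) + (B k).mulVec (U' t) + (Kk k).mulVec (P k t)
        + (∑ j, (C k j).mulVec (P k t - P j t)) + (Ce k).mulVec (P k t) = G k t)
    (E : ℝ → ℝ)
    (hE : ∀ t, E t = Mu.mulVec (U' t) ⬝ᵥ U' t + Ku.mulVec (U t) ⬝ᵥ U t
      + ∑ k, (Mk k).mulVec (P k t) ⬝ᵥ P k t) :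
    ∀ t ∈ Set.Icc 0 T, HasDerivWithinAt E
      (2 * (F t ⬝ᵥ U' t) + 2 * (∑ k, G k t ⬝ᵥ P k t)
        - 2 * (∑ k, (Kk k).mulVec (P k t) ⬝ᵥ P k t)
        - 2 * (∑ k, (Ce k).mulVec (P k t) ⬝ᵥ P k t)
        - ∑ k, ∑ j, (C k j).mulVec (P k t - P j t) ⬝ᵥ (P k t - P j t))
      (Set.Icc 0 T) t := by
  intro t ht
  have hMuS := isHermitian_iff_isSymm.mp hMu.isHermitian
  have hKuS := isHermitian_iff_isSymm.mp hKu.isHermitian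
  have hderiv : HasDerivWithinAt E (2 * (Mu *ᵥ U'' t ⬝ᵥ U' t) + 2 * (Ku *ᵥ U' t ⬝ᵥ U t)
      + ∑ k, 2 * (Mk k *ᵥ P' k t ⬝ᵥ P k t)) (Set.Icc 0 T) t := by
    rw [show E = _ from funext hE]
    exact (((hU' t ht).mulVec_dotProduct_self hMuS).add
      ((hU t ht).mulVec_dotProduct_self hKuS)).add
      (.fun_sum fun k _ =>
        (hP k t ht).mulVec_dotProduct_self (isHermitian_iff_isSymm.mp (hMk k).isHermitian))
  have hmomentum := congrArg (· ⬝ᵥ U' t) (heq1 t ht)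
  have hmass := Finset.sum_congr rfl fun k (_ : k ∈ Finset.univ) =>
    congrArg (· ⬝ᵥ P k t) (heq2 k t ht)
  simp only [add_dotProduct, sub_dotProduct, sum_dotProduct, transpose_mulVec_dotProduct,
    Finset.sum_add_distrib] at hmomentum hmass
  convert hderiv using 1
  rw [hKuS.mulVec_dotProduct_comm (U' t), sum_sum_mulVec_sub_dotProduct_sub C hCsym,
    ← Finset.mul_sum]
  linear_combination -2 * hmomentum - 2 * hmass

/-- Energy identity for the semi-discrete dynamic MPET system in algebraic form
(Theorem 1 of the paper): testing the ODE system with `(U', (P_k))` yields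
`E'(t) = 2⟨F, U'⟩ + 2∑_k ⟨G_k, P_k⟩ − 2∑_k ⟨K_k P_k, P_k⟩ − 2∑_k ⟨C_k^e P_k, P_k⟩
  − ∑_k ∑_j ⟨C_{kj}(P_k − P_j), P_k − P_j⟩`. -/
theorem mpet_semidiscrete_energy_identity
    (J : Type) [Fintype J] [Nonempty J] (N M : ℕ)
    (Mu : Matrix (Fin N) (Fin N) ℝ) (hMu : Mu.PosDef)
    (Ku : Matrix (Fin N) (Fin N) ℝ) (hKu : Ku.PosSemidef)
    (Mk : J → Matrix (Fin M) (Fin M) ℝ) (hMk : ∀ k, (Mk k).PosDef)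
    (Kk : J → Matrix (Fin M) (Fin M) ℝ) (hKk : ∀ k, (Kk k).PosSemidef)
    (Ce : J → Matrix (Fin M) (Fin M) ℝ) (hCe : ∀ k, (Ce k).PosSemidef)
    (B : J → Matrix (Fin M) (Fin N) ℝ)
    (C : J → J → Matrix (Fin M) (Fin M) ℝ) (hC : ∀ k j, (C k j).PosSemidef)
    (hCsym : ∀ k j, C k j = C j k)
    (T : ℝ) (hT : 0 < T)
    (U U' U'' : ℝ → Fin N → ℝ)
    (P P' : J → ℝ → Fin M → ℝ)
    (F : ℝ → Fin N → ℝ) (G : J → ℝ → Fin M → ℝ)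
    (hU : ∀ t ∈ Set.Icc 0 T, HasDerivWithinAt U (U' t) (Set.Icc 0 T) t)
    (hU' : ∀ t ∈ Set.Icc 0 T, HasDerivWithinAt U' (U'' t) (Set.Icc 0 T) t)
    (hU'' : ContinuousOn U'' (Set.Icc 0 T))
    (hP : ∀ k, ∀ t ∈ Set.Icc 0 T, HasDerivWithinAt (P k) (P' k t) (Set.Icc 0 T) t)
    (hP' : ∀ k, ContinuousOn (P' k) (Set.Icc 0 T))
    (hF : ContinuousOn F (Set.Icc 0 T))
    (hG : ∀ k, ContinuousOn (G k) (Set.Icc 0 T))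
    (heq1 : ∀ t ∈ Set.Icc 0 T,
      Mu.mulVec (U'' t) + Ku.mulVec (U t) - ∑ k, (B k)ᵀ.mulVec (P k t) = F t)
    (heq2 : ∀ k, ∀ t ∈ Set.Icc 0 T,
      (Mk k).mulVec (P' k t) + (B k).mulVec (U' t) + (Kk k).mulVec (P k t)
        + (∑ j, (C k j).mulVec (P k t - P j t)) + (Ce k).mulVec (P k t) = G k t)
    (E : ℝ → ℝ)
    (hE : ∀ t, E t = Mu.mulVec (U' t) ⬝ᵥ U' t + Ku.mulVec (U t) ⬝ᵥ U t
      + ∑ k, (Mk k).mulVec (P k t) ⬝ᵥ P k t) :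
    ∀ t ∈ Set.Icc 0 T, HasDerivWithinAt E
      (2 * (F t ⬝ᵥ U' t) + 2 * (∑ k, G k t ⬝ᵥ P k t)
        - 2 * (∑ k, (Kk k).mulVec (P k t) ⬝ᵥ P k t)
        - 2 * (∑ k, (Ce k).mulVec (P k t) ⬝ᵥ P k t)
        - ∑ k, ∑ j, (C k j).mulVec (P k t - P j t) ⬝ᵥ (P k t - P j t))
      (Set.Icc 0 T) t :=
  mpet_semidiscrete_energy_identity_general J N M Mu hMu Ku hKu Mk hMk Kk Ce B C hCsym T U U' U'' P
    P' F G hU hU' hP heq1 heq2 E hE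
end
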